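/- arXiv:2507.14258 — 3 statements merged into one kernel-verified Lean document; each statement's English description precedes it below -/
import Mathlib

section
/- Every well-founded abstract argumentation framework has at least one complete extension. -/
/-- A set of arguments `S` attacks an argument `α` if some `β ∈ S` attacks `α`. -/
def attacks {A : Type*} (R : A → A → Prop) (S : Set A) (α : A) : Prop :=
  ∃ β ∈ S, R β α

/-- A set of arguments `S` is conflict-free if no argument in `S` is attacked by `S`. -/
def conflictFree {A : Type*} (R : A → A → Prop) (S : Set A) : Prop :=
  ∀ β ∈ S, ¬ attacks R S β

/-- An argument `α` is acceptable w.r.t. `S` if every attacker of `α` is attacked by `S`. -/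
def acceptable {A : Type*} (R : A → A → Prop) (α : A) (S : Set A) : Prop :=
  ∀ β, R β α → attacks R S β

/-- A set `S` is admissible if it is conflict-free and every argument in `S`
is acceptable with respect to `S`. -/
def admissible {A : Type*} (R : A → A → Prop) (S : Set A) : Prop :=
  conflictFree R S ∧ ∀ α ∈ S, acceptable R α S

/-- A set `S` is a complete extension if it is admissible and every argument
acceptable with respect to `S` belongs to `S`. -/
def completeExt {A : Type*} (R : A → A → Prop) (S : Set A) : Prop :=
  admissible R S ∧ ∀ α, acceptable R α S → α ∈ S

/-- An AF is well-founded if there is no infinite sequence `α₀, α₁, …`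
with `(α_{i+1}, α_i) ∈ R` for all `i`. -/
def wellFoundedAF {A : Type*} (R : A → A → Prop) : Prop :=
  ¬ ∃ f : ℕ → A, ∀ i : ℕ, R (f (i + 1)) (f i)

/-- Grounded membership predicate defined by well-founded recursion on the
transitive closure of the attack relation. -/
noncomputable def inGrounded {A : Type*} (R : A → A → Prop)
    (hWF : WellFounded (Relation.TransGen R)) : A → Prop :=
  hWF.fix (fun α ih => ∀ β (h : R β α), ∃ γ, ∃ _hg : R γ β,
    ih γ (Relation.TransGen.head ‹R γ β› (Relation.TransGen.single h)))

theorem inGrounded_iff {A : Type*} (R : A → A → Prop)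
    (hWF : WellFounded (Relation.TransGen R)) (α : A) :
    inGrounded R hWF α ↔ ∀ β, R β α → ∃ γ, R γ β ∧ inGrounded R hWF γ := by
  rw [inGrounded, WellFounded.fix_eq]
  constructor
  · intro h β hβ; obtain ⟨γ, hγ, hg⟩ := h β hβ; exact ⟨γ, hγ, hg⟩
  · intro h β hβ; obtain ⟨γ, hγ, hg⟩ := h β hβ; exact ⟨γ, hγ, hg⟩

theorem wf_of_AF {A : Type*} (R : A → A → Prop) (hwf : wellFoundedAF R) :
    WellFounded R := by
  by_contra h
  have h' : ∃ a, ¬ Acc R a := by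
    by_contra hc
    push_neg at hc
    exact h ⟨hc⟩
  obtain ⟨a0, ha0⟩ := h' 
  have step : ∀ a : {a : A // ¬ Acc R a}, ∃ b : {a : A // ¬ Acc R a}, R b.1 a.1 := by
    rintro ⟨a, ha⟩
    by_contra hc
    push_neg at hc
    exact ha (Acc.intro a (fun b hb => by
      by_contra hbacc
      exact hc ⟨b, hbacc⟩ hb))
  choose g hg using step
  let f : ℕ → {a : A // ¬ Acc R a} := fun n => g^[n] ⟨a0, ha0⟩
  refine hwf ⟨fun n => (f n).1, fun i => ?_⟩
  have h1 : f (i + 1) = g (f i) := Function.iterate_succ_apply' g i _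
  show R (f (i + 1)).1 (f i).1
  rw [h1]
  exact hg (f i)

/-- Every well-founded abstract argumentation framework has at least one
complete extension. -/
theorem wellFounded_has_complete_extension {A : Type*} (R : A → A → Prop)
    (hwf : wellFoundedAF R) : ∃ S : Set A, completeExt R S := by
  have hWF : WellFounded (Relation.TransGen R) := (wf_of_AF R hwf).transGen
  set S : Set A := {α | inGrounded R hWF α} with hS
  have hmem : ∀ α, α ∈ S ↔ ∀ β, R β α → ∃ γ, γ ∈ S ∧ R γ β := by
    intro α
    rw [hS, Set.mem_setOf_eq, inGrounded_iff]
    constructor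
    · intro h β hβ; obtain ⟨γ, h1, h2⟩ := h β hβ; exact ⟨γ, h2, h1⟩
    · intro h β hβ; obtain ⟨γ, h1, h2⟩ := h β hβ; exact ⟨γ, h2, h1⟩
  refine ⟨S, ⟨⟨?_, ?_⟩, ?_⟩⟩
  · -- conflict-free
    intro β hβ
    induction β using hWF.induction with
    | _ β ih =>
      rintro ⟨γ, hγS, hγβ⟩
      obtain ⟨δ, hδS, hδγ⟩ := (hmem β).1 hβ γ hγβ
      exact ih γ (Relation.TransGen.single hγβ) hγS ⟨δ, hδS, hδγ⟩
  · -- admissible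
    intro α hα β hβ
    obtain ⟨γ, hγS, hγβ⟩ := (hmem α).1 hα β hβ
    exact ⟨γ, hγS, hγβ⟩
  · -- complete
    intro α hacc
    rw [hmem]
    intro β hβ
    obtain ⟨γ, hγS, hγβ⟩ := hacc β hβ
    exact ⟨γ, hγS, hγβ⟩
end

section
/- Every well-founded abstract argumentation framework has at most one complete extension: if S and T are both complete extensions of a well-founded AF, then S = T. -/
/-
In a well-founded framework a set `S` defending its members lies inside any set `T` containing
the arguments it defends, by well-founded induction along attack chains: if `α ∈ S`, each
attacker `β` of `α` is counter-attacked by some `γ ∈ S`, which lies two attack steps below `α`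
and so is in `T`; thus `T` defends `α`, hence contains it.
Applied in both directions this gives uniqueness.
-/

theorem wellFoundedAF_iff_wellFounded {A : Type*} (R : A → A → Prop) :
    wellFoundedAF R ↔ WellFounded R := by
  rw [wellFounded_iff_isEmpty_descending_chain, isEmpty_subtype, wellFoundedAF, not_exists]

theorem subset_of_forall_acceptable {A : Type*} {R : A → A → Prop} (hR : WellFounded R)
    {S T : Set A} (hS : ∀ α ∈ S, acceptable R α S) (hT : ∀ α, acceptable R α T → α ∈ T) :
    S ⊆ T := by
  intro α
  induction α using hR.transGen.induction with
  | _ α ih =>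
    intro hαS
    refine hT α fun β hβα => ?_
    obtain ⟨γ, hγS, hγβ⟩ := hS α hαS β hβα
    exact ⟨γ, ih γ (.head hγβ (.single hβα)) hγS, hγβ⟩

/-- Every well-founded abstract argumentation framework has at most one
complete extension. -/
theorem wellFounded_complete_extension_unique {A : Type*} (R : A → A → Prop)
    (hwf : wellFoundedAF R) (S T : Set A)
    (hS : completeExt R S) (hT : completeExt R T) : S = T := by
  have hR := (wellFoundedAF_iff_wellFounded R).mp hwf
  exact (subset_of_forall_acceptable hR hS.1.2 hT.2).antisymm
    (subset_of_forall_acceptable hR hT.1.2 hS.2)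
end

section
/- In a well-founded abstract argumentation framework, credulous and skeptical acceptance coincide: an argument belongs to at least one complete extension if and only if it belongs to every complete extension. -/
lemma wellFoundedAF.toWF {A : Type*} {R : A → A → Prop} (hwf : wellFoundedAF R) :
    WellFounded R := by
  by_contra h
  obtain ⟨a, ha⟩ : ∃ a, ¬ Acc R a := by
    by_contra h'
    push_neg at h'
    exact h ⟨h'⟩
  have step : ∀ x : {a // ¬ Acc R a}, ∃ y : {a // ¬ Acc R a}, R y.1 x.1 := by
    rintro ⟨x, hx⟩
    by_contra hc
    push_neg at hc
    exact hx (Acc.intro x fun y hy => by_contra fun hny => hc ⟨y, hny⟩ hy)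
  choose g hg using step
  refine hwf ⟨fun n => (g^[n] ⟨a, ha⟩).1, fun i => ?_⟩
  simp only [Function.iterate_succ_apply']
  exact hg _

/-- Two complete extensions of a well-founded AF coincide. -/
lemma completeExt_unique {A : Type*} {R : A → A → Prop} (hwf : wellFoundedAF R)
    {S T : Set A} (hS : completeExt R S) (hT : completeExt R T) : S = T := by
  have hwfT : WellFounded (Relation.TransGen R) := hwf.toWF.transGen
  have key : ∀ α, α ∈ S ↔ α ∈ T := by
    intro α
    induction α using hwfT.induction with
    | _ α ih =>
      have dir : ∀ {U V : Set A}, completeExt R U → completeExt R V →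
          (∀ β, Relation.TransGen R β α → (β ∈ U ↔ β ∈ V)) → α ∈ U → α ∈ V := by
        intro U V hU hV ihad hαU
        apply hV.2
        intro β hβ
        obtain ⟨γ, hγU, hγβ⟩ := hU.1.2 α hαU β hβ
        have : γ ∈ V := (ihad γ (Relation.TransGen.head hγβ (Relation.TransGen.single hβ))).1 hγU
        exact ⟨γ, this, hγβ⟩
      exact ⟨dir hS hT ih, dir hT hS fun β h => (ih β h).symm⟩
  exact Set.ext key

/-- The grounded extension of a well-founded AF, defined by well-founded recursion:
an argument is in it iff none of its attackers is. -/
noncomputable def grounded {A : Type*} {R : A → A → Prop} (hwf : wellFoundedAF R) : A → Prop :=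
  hwf.toWF.fix (fun α ih => ∀ β (h : R β α), ¬ ih β h)

lemma grounded_iff {A : Type*} {R : A → A → Prop} (hwf : wellFoundedAF R) (α : A) :
    grounded hwf α ↔ ∀ β, R β α → ¬ grounded hwf β := by
  rw [grounded, WellFounded.fix_eq]

lemma grounded_completeExt {A : Type*} {R : A → A → Prop} (hwf : wellFoundedAF R) :
    completeExt R {a | grounded hwf a} := by
  set G : Set A := {a | grounded hwf a} with hG
  have hnot : ∀ β, ¬ grounded hwf β → attacks R G β := by
    intro β hβ
    rw [grounded_iff] at hβ
    push_neg at hβ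
    obtain ⟨γ, hγβ, hγ⟩ := hβ
    exact ⟨γ, hγ, hγβ⟩
  refine ⟨⟨?_, ?_⟩, ?_⟩
  · rintro β hβ ⟨γ, hγ, hγβ⟩
    exact ((grounded_iff hwf β).1 hβ) γ hγβ hγ
  · intro a ha β hβ
    exact hnot β (((grounded_iff hwf a).1 ha) β hβ)
  · intro a ha
    rw [Set.mem_setOf_eq, grounded_iff]
    intro β hβ hgβ
    obtain ⟨γ, hγ, hγβ⟩ := ha β hβ
    exact ((grounded_iff hwf β).1 hgβ) γ hγβ hγ

/-- In a well-founded AF, credulous and skeptical acceptance coincide: an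
argument belongs to at least one complete extension iff it belongs to every
complete extension. -/
theorem wellFounded_credulous_iff_skeptical {A : Type*} (R : A → A → Prop)
    (hwf : wellFoundedAF R) (α : A) :
    (∃ S : Set A, completeExt R S ∧ α ∈ S) ↔
      (∀ S : Set A, completeExt R S → α ∈ S) := by
  constructor
  · rintro ⟨S, hS, hαS⟩ T hT
    rw [← completeExt_unique hwf hS hT]
    exact hαS
  · intro h
    exact ⟨_, grounded_completeExt hwf, h _ (grounded_completeExt hwf)⟩
end
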